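/- arXiv:1208.4786 — 4 statements merged into one kernel-verified Lean document; each statement's English description precedes it below -/
import Mathlib

section
/- We have $\sum_{n=1}^{\infty} \frac{\mu(n)}{n^2 \operatorname{lcm}(5,n)} = \frac{1}{\zeta(3)} \cdot \frac{5^2-1}{5^3-1}$. -/
open ArithmeticFunction
open scoped ArithmeticFunction.Moebius

/-!
Split the series `∑ μ(n)/n^s = 1/ζ(s)` into the terms with `p ∣ n` and those with `p ∤ n`.
Since `μ(pm) = -μ(m)` for `p ∤ m` and `μ(pm) = 0` otherwise, the first part is `-p^(-s)` times
the second, which determines both. As `lcm(p, n)` is `n` or `pn` according as `p ∣ n` or not,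
the series `∑ μ(n)/(n^(s-1) lcm(p, n))` is the first part plus `1/p` times the second.
-/

lemma LSeries.term_moebius_natCast (k n : ℕ) :
    LSeries.term (fun n ↦ (μ n : ℂ)) k n = μ n / (n : ℂ) ^ k := by
  rw [LSeries.term_def₀ (by simp), Complex.cpow_neg, Complex.cpow_natCast, div_eq_mul_inv]

lemma summable_moebius_div_pow {k : ℕ} (hk : 1 < k) :
    Summable fun n : ℕ ↦ (μ n : ℂ) / (n : ℂ) ^ k :=
  (summable_congr (LSeries.term_moebius_natCast k)).mp <|
    LSeriesSummable_moebius_iff.mpr (by simpa using hk)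

lemma tsum_moebius_div_pow {k : ℕ} (hk : 1 < k) :
    ∑' n : ℕ, (μ n : ℂ) / (n : ℂ) ^ k = 1 / riemannZeta k := by
  have hk' : 1 < (k : ℂ).re := by simpa using hk
  have h := LSeries_one_mul_Lseries_moebius hk'
  rw [LSeries_one_eq_riemannZeta hk', LSeries, tsum_congr (LSeries.term_moebius_natCast k)] at h
  exact eq_one_div_of_mul_eq_one_right h

lemma tsum_indicator_dvd {α : Type*} [AddCommMonoid α] [TopologicalSpace α] {p : ℕ}
    (hp : p ≠ 0) (f : ℕ → α) : ∑' n, {n | p ∣ n}.indicator f n = ∑' m, f (p * m) := by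
  have hsupp : Function.support ({n | p ∣ n}.indicator f) ⊆ Set.range (p * ·) := by
    intro n hn
    obtain ⟨m, rfl⟩ : p ∣ n := Set.mem_of_indicator_ne_zero (s := {n | p ∣ n}) hn
    exact ⟨m, rfl⟩
  rw [← (mul_right_injective₀ hp).tsum_eq hsupp]
  exact tsum_congr fun m ↦ Set.indicator_of_mem (s := {n | p ∣ n}) (dvd_mul_right p m) f

lemma prime_pow_sub_one_ne_zero {p : ℕ} (hp : p.Prime) {k : ℕ} (hk : k ≠ 0) :
    (p : ℂ) ^ k - 1 ≠ 0 := by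
  rw [sub_ne_zero]
  exact_mod_cast (Nat.one_lt_pow hk hp.one_lt).ne'

lemma moebius_prime_mul {p : ℕ} (hp : p.Prime) (m : ℕ) :
    μ (p * m) = if p ∣ m then 0 else -μ m := by
  split_ifs with h
  · refine moebius_eq_zero_of_not_squarefree fun hsq ↦ hp.one_lt.ne' ?_
    exact Nat.isUnit_iff.mp (hsq p (mul_dvd_mul_left p h))
  · rw [isMultiplicative_moebius.map_mul_of_coprime (hp.coprime_iff_not_dvd.mpr h),
      moebius_apply_prime hp, neg_one_mul]

lemma moebius_prime_mul_div_pow {p : ℕ} (hp : p.Prime) (k m : ℕ) :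
    (μ (p * m) : ℂ) / ((p * m : ℕ) : ℂ) ^ k =
      -((p : ℂ) ^ k)⁻¹ *
        {n | ¬ p ∣ n}.indicator (fun n ↦ (μ n : ℂ) / (n : ℂ) ^ k) m := by
  rw [moebius_prime_mul hp]
  by_cases h : p ∣ m
  · simp [h]
  · simp only [h, if_false, Set.indicator_of_mem (s := {n | ¬ p ∣ n}) h]
    push_cast
    ring

lemma tsum_indicator_dvd_moebius_div_pow {p : ℕ} (hp : p.Prime) (k : ℕ) :
    ∑' n, {n | p ∣ n}.indicator (fun n ↦ (μ n : ℂ) / (n : ℂ) ^ k) n =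
      -((p : ℂ) ^ k)⁻¹ *
        ∑' n, {n | ¬ p ∣ n}.indicator (fun n ↦ (μ n : ℂ) / (n : ℂ) ^ k) n := by
  rw [tsum_indicator_dvd hp.ne_zero, ← tsum_mul_left]
  exact tsum_congr fun m ↦ by exact_mod_cast moebius_prime_mul_div_pow hp k m

lemma tsum_indicator_not_dvd_moebius_div_pow {p : ℕ} (hp : p.Prime) {k : ℕ} (hk : 1 < k) :
    ∑' n, {n | ¬ p ∣ n}.indicator (fun n ↦ (μ n : ℂ) / (n : ℂ) ^ k) n =
      (p : ℂ) ^ k / ((p : ℂ) ^ k - 1) * (1 / riemannZeta k) := by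
  have hsplit := tsum_moebius_div_pow hk
  rw [← (summable_moebius_div_pow hk).tsum_subtype_add_tsum_subtype_compl {n | p ∣ n},
    tsum_subtype _ fun n : ℕ ↦ (μ n : ℂ) / (n : ℂ) ^ k,
    tsum_subtype _ fun n : ℕ ↦ (μ n : ℂ) / (n : ℂ) ^ k,
    Set.compl_ofPred, tsum_indicator_dvd_moebius_div_pow hp] at hsplit
  have hpk : (p : ℂ) ^ k ≠ 0 := pow_ne_zero _ (Nat.cast_ne_zero.mpr hp.ne_zero)
  have hpk1 := prime_pow_sub_one_ne_zero hp (k := k) (by omega)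
  rw [← hsplit]
  field_simp
  ring

lemma moebius_div_pow_mul_lcm_eq {p : ℕ} (hp : p.Prime) (k n : ℕ) :
    (μ n : ℂ) / ((n : ℂ) ^ k * (Nat.lcm p n : ℂ)) =
      {n | p ∣ n}.indicator (fun n ↦ (μ n : ℂ) / (n : ℂ) ^ (k + 1)) n +
        (p : ℂ)⁻¹ *
          {n | ¬ p ∣ n}.indicator (fun n ↦ (μ n : ℂ) / (n : ℂ) ^ (k + 1)) n := by
  by_cases h : p ∣ n
  · simp [h, Nat.lcm_eq_right h, pow_succ]
  · simp [h, (hp.coprime_iff_not_dvd.mpr h).lcm_eq_mul, pow_succ]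
    ring

theorem tsum_moebius_div_pow_mul_lcm {p : ℕ} (hp : p.Prime) {k : ℕ} (hk : 0 < k) :
    ∑' n : ℕ, (μ n : ℂ) / ((n : ℂ) ^ k * (Nat.lcm p n : ℂ)) =
      1 / riemannZeta (k + 1 : ℕ) * (((p : ℂ) ^ k - 1) / ((p : ℂ) ^ (k + 1) - 1)) := by
  have hf := summable_moebius_div_pow (show 1 < k + 1 by omega)
  rw [tsum_congr (moebius_div_pow_mul_lcm_eq hp k), (hf.indicator _).tsum_add
    ((hf.indicator _).mul_left _), tsum_mul_left, tsum_indicator_dvd_moebius_div_pow hp,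
    tsum_indicator_not_dvd_moebius_div_pow hp (by omega)]
  have hp0 : (p : ℂ) ≠ 0 := Nat.cast_ne_zero.mpr hp.ne_zero
  have hpk1 := prime_pow_sub_one_ne_zero hp k.succ_ne_zero
  field_simp
  ring

/-- `∑ μ(n)/(n² · lcm(5,n)) = (1/ζ(3)) · (5²-1)/(5³-1)`. -/
theorem stmt_1 :
    ∑' n : ℕ, (μ n : ℂ) / ((n : ℂ) ^ 2 * (Nat.lcm 5 n : ℂ)) =
      (1 / riemannZeta 3) * (((5 : ℂ) ^ 2 - 1) / ((5 : ℂ) ^ 3 - 1)) := by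
  simpa using tsum_moebius_div_pow_mul_lcm Nat.prime_five two_pos
end

section
/- We have $\sum_{n=1}^{\infty} \frac{\mu(n)}{\operatorname{lcm}(5,n)^3} = 0$. -/
/-!
For a prime `p`, split the series into the terms with `p ∣ n` and those with `p ∤ n`.
Writing `n = p * m`, the term at `p * m` vanishes if `p ∣ m` (then `p * m` is not squarefree),
and otherwise equals minus the term at `m`, since `μ (p * m) = -μ m` and
`lcm p (p * m) = p * m = lcm p m`. So the two halves of the series cancel.
-/

open ArithmeticFunction
open scoped ArithmeticFunction.Moebius

theorem tsum_eq_tsum_mul_add_tsum_indicator_not_dvd {α : Type*} [AddCommGroup α] [UniformSpace α]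
    [IsUniformAddGroup α] [CompleteSpace α] [T2Space α] {f : ℕ → α} (hf : Summable f) {p : ℕ}
    (hp : p ≠ 0) :
    ∑' n, f n = ∑' m, f (p * m) + ∑' n, {n | ¬p ∣ n}.indicator f n := by
  have hrange : Set.range (p * ·) = {n | p ∣ n} := by
    ext n; simp [Dvd.dvd, eq_comm]
  rw [← tsum_range f (mul_right_injective₀ hp), ← tsum_subtype, hrange]
  exact ((hf.subtype _).tsum_add_tsum_compl (hf.subtype _)).symm

namespace ArithmeticFunction

theorem moebius_prime_mul_of_dvd {p m : ℕ} (hp : p.Prime) (h : p ∣ m) : μ (p * m) = 0 :=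
  moebius_eq_zero_of_not_squarefree fun hsq =>
    (hp.coprime_iff_not_dvd.mp (Nat.coprime_of_squarefree_mul hsq)) h

theorem moebius_prime_mul_of_not_dvd {p m : ℕ} (hp : p.Prime) (h : ¬p ∣ m) :
    μ (p * m) = -μ m := by
  rw [isMultiplicative_moebius.map_mul_of_coprime (hp.coprime_iff_not_dvd.mpr h),
    moebius_apply_prime hp, neg_one_mul]

end ArithmeticFunction

theorem summable_moebius_div_lcm_pow {a k : ℕ} (hk : 1 < k) :
    Summable fun n => (μ n : ℝ) / (Nat.lcm a n : ℝ) ^ k := by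
  refine .of_norm_bounded (Real.summable_one_div_nat_pow.mpr hk) fun n => ?_
  rcases (Nat.lcm a n).eq_zero_or_pos with h0 | hpos
  · simp [h0, zero_pow (by omega : k ≠ 0)]
  have hn : 0 < n := Nat.pos_of_dvd_of_pos (Nat.dvd_lcm_right a n) hpos
  have hlcm : (n : ℝ) ≤ Nat.lcm a n := by
    exact_mod_cast Nat.le_of_dvd hpos (Nat.dvd_lcm_right a n)
  rw [norm_div, norm_pow, Real.norm_natCast, Real.norm_eq_abs]
  exact div_le_div₀ zero_le_one (mod_cast abs_moebius_le_one) (by positivity) (by gcongr)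

theorem moebius_div_lcm_pow_prime_mul {p : ℕ} (hp : p.Prime) (k m : ℕ) :
    (μ (p * m) : ℝ) / (Nat.lcm p (p * m) : ℝ) ^ k =
      -{n | ¬p ∣ n}.indicator (fun n => (μ n : ℝ) / (Nat.lcm p n : ℝ) ^ k) m := by
  by_cases h : p ∣ m
  · simp [h, moebius_prime_mul_of_dvd hp h]
  · simp [h, moebius_prime_mul_of_not_dvd hp h, Nat.lcm_eq_right (dvd_mul_right p m),
      (hp.coprime_iff_not_dvd.mpr h).lcm_eq_mul, neg_div]

theorem tsum_moebius_div_lcm_prime_pow_eq_zero {p k : ℕ} (hp : p.Prime) (hk : 1 < k) :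
    ∑' n, (μ n : ℝ) / (Nat.lcm p n : ℝ) ^ k = 0 := by
  rw [tsum_eq_tsum_mul_add_tsum_indicator_not_dvd (summable_moebius_div_lcm_pow hk) hp.ne_zero]
  simp only [moebius_div_lcm_pow_prime_mul hp, tsum_neg, neg_add_cancel]

/-- `∑ μ(n)/lcm(5,n)³ = 0`. -/
theorem stmt_3 :
    ∑' n : ℕ, (μ n : ℝ) / (Nat.lcm 5 n : ℝ) ^ 3 = 0 :=
  tsum_moebius_div_lcm_prime_pow_eq_zero Nat.prime_five (by norm_num)
end

section
/- Let $n \geq 1$ be an integer and let $0 < \tilde{u} < 1$ be a real number. Define $h_1(x) := x^{n\tilde{u}+n+1} - x^{n\tilde{u}} + x^{(n+1)\tilde{u}} - x^{(n+1)\tilde{u}+n} + x^n - x^{n+1}$. Then $h_1(x) > 0$ for all real $x > 1$. -/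
open Real

/-- For an integer `n ≥ 1` and `0 < ũ < 1`, the function
`h₁(x) = x^(nũ+n+1) - x^(nũ) + x^((n+1)ũ) - x^((n+1)ũ+n) + x^n - x^(n+1)`
is positive for all `x > 1`. -/
theorem stmt_4 (n : ℕ) (hn : 1 ≤ n) (u : ℝ) (hu0 : 0 < u) (hu1 : u < 1) (x : ℝ) (hx : 1 < x) :
    0 < x ^ (n * u + n + 1) - x ^ (n * u) + x ^ ((n + 1) * u)
        - x ^ ((n + 1) * u + n) + x ^ (n : ℝ) - x ^ ((n : ℝ) + 1) := by
  have hx0 : (0:ℝ) < x := lt_trans one_pos hx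
  set a : ℝ := x ^ u with ha
  have ha1 : 1 < a := Real.one_lt_rpow_iff_of_pos hx0 |>.mpr (Or.inl ⟨hx, hu0⟩)
  have hax : a < x := by
    have h := Real.rpow_lt_rpow_of_exponent_lt hx hu1
    simpa using h
  have hpow : ∀ m : ℕ, x ^ ((m:ℝ) * u) = a ^ m := by
    intro m
    rw [mul_comm, Real.rpow_mul hx0.le, ha, Real.rpow_natCast]
  have e1 : x ^ (n * u + n + 1) = a ^ n * x ^ (n+1) := by
    rw [show ((n:ℝ) * u + n + 1) = (n:ℝ)*u + ((n+1:ℕ):ℝ) by push_cast; ring,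
      Real.rpow_add hx0, hpow n, Real.rpow_natCast]
  have e2 : x ^ (n * u) = a ^ n := hpow n
  have e3 : x ^ ((n + 1 : ℝ) * u) = a ^ (n+1) := by
    have := hpow (n+1); push_cast at this ⊢; linarith [this]
  have e4 : x ^ ((n + 1 : ℝ) * u + n) = a ^ (n+1) * x ^ n := by
    rw [Real.rpow_add hx0, e3, Real.rpow_natCast]
  have e5 : x ^ (n:ℝ) = x ^ n := Real.rpow_natCast x n
  have e6 : x ^ ((n:ℝ) + 1) = x ^ (n+1) := by
    rw [← Real.rpow_natCast x (n+1)]; push_cast; ring_nf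
  rw [e1, e2, e3, e4, e5, e6]
  have key : a ^ n * x ^ (n+1) - a ^ n + a ^ (n+1) - a ^ (n+1) * x ^ n + x ^ n - x ^ (n+1)
      = (x - a) * (a - 1) *
        ((∑ i ∈ Finset.range n, (x ^ n * a ^ i - x ^ i * a ^ (n - 1 - i)))) := by
    have g1 : (∑ i ∈ Finset.range n, a ^ i) * (a - 1) = a ^ n - 1 := geom_sum_mul a n
    have g2 : (∑ i ∈ Finset.range n, x ^ i * a ^ (n - 1 - i)) * (x - a) = x ^ n - a ^ n :=
      geom_sum₂_mul x a n
    have hS : (∑ i ∈ Finset.range n, (x ^ n * a ^ i - x ^ i * a ^ (n - 1 - i)))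
        = x ^ n * (∑ i ∈ Finset.range n, a ^ i)
          - (∑ i ∈ Finset.range n, x ^ i * a ^ (n - 1 - i)) := by
      rw [Finset.sum_sub_distrib, Finset.mul_sum]
    rw [hS]
    linear_combination (a - 1) * g2 - x ^ n * (x - a) * g1
  rw [key]
  apply mul_pos (mul_pos (by linarith) (by linarith))
  apply Finset.sum_pos
  · intro i hi
    have hi' : i ≤ n - 1 := Nat.le_sub_one_of_lt (Finset.mem_range.mp hi)
    have h1 : x ^ i * a ^ (n - 1 - i) ≤ x ^ i * x ^ (n - 1 - i) := by
      apply mul_le_mul_of_nonneg_left (pow_le_pow_left₀ (by linarith) hax.le _) (by positivity)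
    have h2 : x ^ i * x ^ (n - 1 - i) = x ^ (n - 1) := by
      rw [← pow_add]; congr 1; omega
    have h3 : x ^ (n-1) < x ^ n := pow_lt_pow_right₀ hx (by omega)
    have h4 : x ^ n ≤ x ^ n * a ^ i :=
      le_mul_of_one_le_right (by positivity) (one_le_pow₀ ha1.le)
    linarith
  · exact Finset.nonempty_range_iff.mpr (by omega)
end

section
/- Let $k \subseteq K$ be number fields with rings of integers $\mathcal{O}_k \subseteq \mathcal{O}_K$. Let $\mathfrak{A}$ be a nonzero ideal of $\mathcal{O}_K$ and $B$ a nonzero ideal of $\mathcal{O}_k$. Then $(\mathfrak{A} + B\mathcal{O}_K) \cap \mathcal{O}_k = (\mathfrak{A} \cap \mathcal{O}_k) + B$. -/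
/-!
Let `I = (𝔄 + B𝓞_K) ∩ 𝓞_k`. Since `B ⊆ I`, write `B = I H`. In `𝓞_K` the modular law gives
`I𝓞_K = (I𝓞_K ∩ 𝔄) + B𝓞_K`, and writing `I𝓞_K ∩ 𝔄 = I𝓞_K · 𝔄'` and cancelling the nonzero
ideal `I𝓞_K` yields `𝔄' + H𝓞_K = 1`. By going up, coprimality descends: `(𝔄' ∩ 𝓞_k) + H = 1`.
Multiplying by `I` gives `I ⊆ I(𝔄' ∩ 𝓞_k) + IH ⊆ (𝔄 ∩ 𝓞_k) + B`.
-/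

open NumberField

namespace Ideal

variable {R S : Type*} [CommRing R] [CommRing S] [Algebra R S]

theorem comap_sup_eq_top_of_sup_map_eq_top [Algebra.IsIntegral R S] {𝔞 : Ideal S} {H : Ideal R}
    (h : 𝔞 ⊔ map (algebraMap R S) H = ⊤) : comap (algebraMap R S) 𝔞 ⊔ H = ⊤ := by
  by_contra hne
  obtain ⟨m, hm, hle⟩ := exists_le_maximal _ hne
  obtain ⟨P, h𝔞P, hP, hPm⟩ :=
    exists_ideal_over_prime_of_isIntegral m 𝔞 (le_sup_left.trans hle)
  refine hP.ne_top (eq_top_iff.2 (h ▸ sup_le h𝔞P ?_))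
  exact map_le_iff_le_comap.2 (hPm ▸ le_sup_right.trans hle)

theorem comap_sup_map_eq_comap_sup [IsDedekindDomain R] [IsDedekindDomain S]
    [Algebra.IsIntegral R S] [FaithfulSMul R S] (𝔄 : Ideal S) {B : Ideal R} (hB : B ≠ ⊥) :
    comap (algebraMap R S) (𝔄 ⊔ map (algebraMap R S) B) = comap (algebraMap R S) 𝔄 ⊔ B := by
  refine le_antisymm ?_ (sup_le (comap_mono le_sup_left) (le_comap_of_map_le le_sup_right))
  generalize hI : comap (algebraMap R S) (𝔄 ⊔ map (algebraMap R S) B) = I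
  have hBI : B ≤ I := hI ▸ map_le_iff_le_comap.1 le_sup_right
  have hIS : map (algebraMap R S) I ≤ 𝔄 ⊔ map (algebraMap R S) B := hI ▸ map_comap_le
  obtain ⟨H, rfl⟩ : I ∣ B := dvd_iff_le.2 hBI
  have hIS0 : map (algebraMap R S) I ≠ ⊥ := map_ne_bot_of_ne_bot (left_ne_zero_of_mul hB)
  obtain ⟨𝔄', h𝔄'⟩ : map (algebraMap R S) I ∣ map (algebraMap R S) I ⊓ 𝔄 :=
    dvd_iff_le.2 inf_le_left
  have hcop : 𝔄' ⊔ map (algebraMap R S) H = ⊤ := by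
    apply mul_left_cancel₀ hIS0
    rw [mul_sup, ← h𝔄', ← Ideal.map_mul, mul_top, inf_sup_assoc_of_le _ (map_mono hBI),
      inf_eq_left.2 hIS]
  have hI𝔄' : I * comap (algebraMap R S) 𝔄' ≤ comap (algebraMap R S) 𝔄 := by
    rw [← map_le_iff_le_comap, Ideal.map_mul]
    exact (mul_mono_right map_comap_le).trans (h𝔄' ▸ inf_le_right)
  calc I = I * (comap (algebraMap R S) 𝔄' ⊔ H) := by
        rw [comap_sup_eq_top_of_sup_map_eq_top hcop, mul_top]
    _ = I * comap (algebraMap R S) 𝔄' ⊔ I * H := mul_sup _ _ _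
    _ ≤ comap (algebraMap R S) 𝔄 ⊔ I * H := sup_le_sup_right hI𝔄' _

end Ideal

theorem stmt_8_general (k K : Type*) [Field k] [Field K] [NumberField k] [NumberField K]
    [Algebra k K] (𝔄 : Ideal (𝓞 K)) (B : Ideal (𝓞 k)) (hB : B ≠ ⊥) :
    Ideal.comap (algebraMap (𝓞 k) (𝓞 K)) (𝔄 ⊔ Ideal.map (algebraMap (𝓞 k) (𝓞 K)) B) =
      Ideal.comap (algebraMap (𝓞 k) (𝓞 K)) 𝔄 ⊔ B :=
  Ideal.comap_sup_map_eq_comap_sup 𝔄 hB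

/-- For number fields `k ⊆ K`, a nonzero ideal `𝔄` of `𝓞 K` and a nonzero ideal
`B` of `𝓞 k`, the contraction of `𝔄 + B𝓞 K` to `𝓞 k` equals `(𝔄 ∩ 𝓞 k) + B`. -/
theorem stmt_8 (k K : Type*) [Field k] [Field K] [NumberField k] [NumberField K]
    [Algebra k K] (𝔄 : Ideal (𝓞 K)) (h𝔄 : 𝔄 ≠ ⊥) (B : Ideal (𝓞 k)) (hB : B ≠ ⊥) :
    Ideal.comap (algebraMap (𝓞 k) (𝓞 K)) (𝔄 ⊔ Ideal.map (algebraMap (𝓞 k) (𝓞 K)) B) =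
      Ideal.comap (algebraMap (𝓞 k) (𝓞 K)) 𝔄 ⊔ B :=
  stmt_8_general k K 𝔄 B hB
end
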